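/- Define d_n(a, y) := Σ_{x=1}^{n} binom(x−1, y−a) · binom(n−x, n−y) · (a−1)! · (n−a)!. Then d_n(1, y) = (n−1)! for all 1 ≤ y ≤ n, and d_n satisfies d_n(a+1, y) = ((y−a)/(n−a)) d_n(a, y) + ((n−y+1)/(n−a)) d_n(a, y−1); consequently d_n(a, x) = n!/(n−a+1) if x ≥ a and d_n(a, x) = 0 if x < a. -/

import Mathlib

/-!
Substituting `i = x - 1`, the sum defining `D n a y` is the upper-index Chu–Vandermonde sum
`∑ i, C(i, y - a) · C(n - 1 - i, n - y) = C(n, n - a + 1)`, which does not depend on `y`.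
Hence `D n a y = C(n, n - a + 1) (a - 1)! (n - a)! = n! / (n - a + 1)` for `a ≤ y`, and the
recurrence is an identity between these closed forms, because `(y - a) + (n - y + 1) = n - a + 1`.
-/

open Finset

/-- Binomial coefficient with an integer lower index, zero when negative. -/
def chooseZ (m : ℕ) (k : ℤ) : ℕ := if 0 ≤ k then m.choose k.toNat else 0

/-- The drop function for a single-row diagram. -/
def D (n a y : ℕ) : ℕ :=
  ∑ x ∈ Finset.Icc 1 n,
    chooseZ (x - 1) ((y : ℤ) - a) * Nat.choose (n - x) (n - y) * Nat.factorial (a - 1) * Nat.factorial (n - a)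

open Nat

theorem Nat.sum_range_choose_mul_choose_sub (n p q : ℕ) :
    ∑ i ∈ range (n + 1), i.choose p * (n - i).choose q = (n + 1).choose (p + q + 1) := by
  induction n generalizing q with
  | zero => cases p <;> cases q <;> simp [Nat.choose_eq_zero_of_lt]
  | succ n ih =>
    rw [sum_range_succ, Nat.sub_self]
    cases q with
    | zero =>
      have h0 := ih 0
      simp only [Nat.choose_zero_right, mul_one, add_zero] at h0 ⊢
      rw [h0, Nat.choose_succ_succ' (n + 1) p, add_comm]
    | succ q =>
      have hpascal : ∀ i ∈ range (n + 1), i.choose p * (n + 1 - i).choose (q + 1) =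
          i.choose p * (n - i).choose q + i.choose p * (n - i).choose (q + 1) := by
        intro i hi
        rw [Nat.sub_add_comm (Nat.lt_succ_iff.mp (mem_range.mp hi)), Nat.choose_succ_succ',
          mul_add]
      rw [sum_congr rfl hpascal, sum_add_distrib, ih, ih, Nat.choose_zero_succ, mul_zero,
        add_zero, show p + (q + 1) + 1 = p + q + 1 + 1 by ring, Nat.choose_succ_succ' (n + 1)]

theorem chooseZ_natCast_sub {a y : ℕ} (m : ℕ) (h : a ≤ y) :
    chooseZ m ((y : ℤ) - a) = m.choose (y - a) := by
  rw [chooseZ, if_pos (by omega)]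
  congr 1
  omega

theorem chooseZ_natCast_sub_of_lt {a y : ℕ} (m : ℕ) (h : y < a) :
    chooseZ m ((y : ℤ) - a) = 0 :=
  if_neg (by omega)

theorem D_eq_zero_of_lt {n a y : ℕ} (h : y < a) : D n a y = 0 :=
  sum_eq_zero fun x _ => by simp [chooseZ_natCast_sub_of_lt _ h]

theorem D_eq_choose_mul_factorial_mul_factorial {n a y : ℕ} (ha : 1 ≤ a) (hay : a ≤ y)
    (hyn : y ≤ n) : D n a y = n.choose (n - a + 1) * (a - 1)! * (n - a)! := by
  have hsum : ∑ x ∈ Icc 1 n, chooseZ (x - 1) ((y : ℤ) - a) * (n - x).choose (n - y) =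
      n.choose (n - a + 1) := by
    obtain ⟨m, rfl⟩ : ∃ m, n = m + 1 := ⟨n - 1, by omega⟩
    rw [← Ico_add_one_right_eq_Icc, sum_Ico_eq_sum_range, Nat.add_sub_cancel,
      show m + 1 - a + 1 = (y - a) + (m + 1 - y) + 1 by omega,
      ← Nat.sum_range_choose_mul_choose_sub]
    refine sum_congr rfl fun i _ => ?_
    rw [chooseZ_natCast_sub _ hay]
    congr 2 <;> omega
  simp only [D, ← sum_mul, hsum]

theorem D_mul_eq_factorial {n a y : ℕ} (ha : 1 ≤ a) (hay : a ≤ y) (hyn : y ≤ n) :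
    D n a y * (n - a + 1) = n ! := by
  have hk : n - a + 1 ≤ n := by omega
  rw [D_eq_choose_mul_factorial_mul_factorial ha hay hyn,
    ← Nat.choose_mul_factorial_mul_factorial hk, show n - (n - a + 1) = a - 1 by omega,
    Nat.factorial_succ]
  ring

theorem D_eq_factorial_div {n a y : ℕ} (ha : 1 ≤ a) (hay : a ≤ y) (hyn : y ≤ n) :
    D n a y = n ! / (n - a + 1) :=
  (Nat.div_eq_of_eq_mul_left (by omega) (D_mul_eq_factorial ha hay hyn).symm).symm

theorem D_cast_eq {n a y : ℕ} (ha : 1 ≤ a) (hyn : y ≤ n) :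
    (D n a y : ℚ) = if a ≤ y then (n ! : ℚ) / ((n : ℚ) - a + 1) else 0 := by
  split_ifs with hay
  · have hcast : ((n - a + 1 : ℕ) : ℚ) = (n : ℚ) - a + 1 := by
      push_cast [Nat.cast_sub (hay.trans hyn)]; ring
    rw [eq_div_iff (by rw [← hcast]; positivity), ← hcast]
    exact_mod_cast D_mul_eq_factorial ha hay hyn
  · simp [D_eq_zero_of_lt (not_le.mp hay)]

theorem D_succ_eq {n a y : ℕ} (ha : 1 ≤ a) (han : a < n) (hyn : y ≤ n) :
    (D n (a + 1) y : ℚ) =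
      ((y - a) / (n - a)) * D n a y + ((n - y + 1) / (n - a)) * D n a (y - 1) := by
  rcases lt_trichotomy y a with hya | rfl | hay
  · simp [D_eq_zero_of_lt hya, D_eq_zero_of_lt (show y < a + 1 by omega),
      D_eq_zero_of_lt (show y - 1 < a by omega)]
  · simp [D_eq_zero_of_lt (show y < y + 1 by omega), D_eq_zero_of_lt (show y - 1 < y by omega)]
  · have hna : 0 < (n : ℚ) - a := sub_pos.mpr (by exact_mod_cast han)
    have hna1 : 0 < (n : ℚ) - a + 1 := by linarith
    rw [D_cast_eq (by omega) hyn, D_cast_eq ha hyn, D_cast_eq ha (by omega),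
      if_pos (show a + 1 ≤ y by omega), if_pos hay.le, if_pos (show a ≤ y - 1 by omega)]
    rw [show (n : ℚ) - (a + 1 : ℕ) + 1 = n - a by push_cast; ring]
    field_simp
    ring

theorem single_row_drop_function_general (n : ℕ) :
    (∀ y ∈ Finset.Icc 1 n, D n 1 y = Nat.factorial (n - 1)) ∧
    (∀ a y, 1 ≤ a → a < n → y ∈ Finset.Icc 1 n →
      (D n (a + 1) y : ℚ) =
        (((y : ℚ) - a) / ((n : ℚ) - a)) * D n a y +
          (((n : ℚ) - y + 1) / ((n : ℚ) - a)) * D n a (y - 1)) ∧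
    (∀ a x, 1 ≤ a → a ≤ n → x ∈ Finset.Icc 1 n →
      D n a x = if a ≤ x then Nat.factorial n / (n - a + 1) else 0) := by
  refine ⟨fun y hy => ?_, fun a y ha han hy => D_succ_eq ha han (mem_Icc.mp hy).2,
    fun a x ha _ hx => ?_⟩
  · obtain ⟨hy1, hyn⟩ := mem_Icc.mp hy
    rw [D_eq_choose_mul_factorial_mul_factorial le_rfl hy1 hyn,
      Nat.sub_add_cancel (hy1.trans hyn)]
    simp
  · split_ifs with hax
    · exact D_eq_factorial_div ha hax (mem_Icc.mp hx).2
    · exact D_eq_zero_of_lt (not_le.mp hax)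

theorem single_row_drop_function (n : ℕ) (hn : 1 ≤ n) :
    (∀ y ∈ Finset.Icc 1 n, D n 1 y = Nat.factorial (n - 1)) ∧
    (∀ a y, 1 ≤ a → a < n → y ∈ Finset.Icc 1 n →
      (D n (a + 1) y : ℚ) =
        (((y : ℚ) - a) / ((n : ℚ) - a)) * D n a y +
          (((n : ℚ) - y + 1) / ((n : ℚ) - a)) * D n a (y - 1)) ∧
    (∀ a x, 1 ≤ a → a ≤ n → x ∈ Finset.Icc 1 n →
      D n a x = if a ≤ x then Nat.factorial n / (n - a + 1) else 0) :=
  single_row_drop_function_general n
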